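/- arXiv:1206.6712 — 2 statements merged into one kernel-verified Lean document; each statement's English description precedes it below -/
import Mathlib

section
/- A necessary condition for the existence of a quasi-stationary distribution is the existence of a state x ∈ Λ and θ > 0 such that E(exp(θ τ^x)) < ∞, i.e. the absorption time from some state has a finite exponential moment. -/
open Filter
open scoped Classical

/-- Survival probability at time `t` of the chain with semigroup `P` on `Λ ∪ {0}`
(encoded as `Option Λ`, `none` being the absorbing state `0`), started from `μ`. -/
noncomputable def surv {Λ : Type*} [Countable Λ] (P : ℝ → Option Λ → Option Λ → ℝ)
    (μ : Λ → ℝ) (t : ℝ) : ℝ := 1 - ∑' z : Λ, μ z * P t (some z) none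

/-- Conditioned evolution: law at time `t` conditioned on non-absorption. -/
noncomputable def Tcond {Λ : Type*} [Countable Λ] (P : ℝ → Option Λ → Option Λ → ℝ)
    (μ : Λ → ℝ) (t : ℝ) (x : Λ) : ℝ :=
  (∑' z : Λ, μ z * P t (some z) (some x)) / surv P μ t

/-!
Invariance of `ν` under the conditioned evolution makes the survival probability
`s(t) = P_ν(τ > t)` multiplicative: `s(s + t) = s(s) s(t)`. Since absorption is certain,
`s(t₀) < 1` for some `t₀ > 0`, so `s` decays exponentially at some rate `κ > 0`. For any state `x`
with `ν x > 0` we have `P(τ^x > t) ≤ s(t) / ν x`, hence `E exp(θ τ^x) < ∞` for every `θ < κ`.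
-/

open MeasureTheory Set Real

section Summation

variable {α : Type*}

lemma summable_of_tsum_eq_one {f : α → ℝ} (h : ∑' a, f a = 1) : Summable f :=
  by_contra fun hf => by simp [tsum_eq_zero_of_not_summable hf] at h

lemma le_one_of_tsum_eq_one {f : α → ℝ} (hf : ∀ a, 0 ≤ f a) (h : ∑' a, f a = 1) (a : α) :
    f a ≤ 1 :=
  h ▸ (summable_of_tsum_eq_one h).le_tsum a fun b _ => hf b

lemma exists_pos_of_tsum_eq_one {f : α → ℝ} (hf : ∀ a, 0 ≤ f a) (h : ∑' a, f a = 1) :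
    ∃ a, 0 < f a := by
  by_contra! hle
  simp [fun a => le_antisymm (hle a) (hf a)] at h

lemma Summable.mul_of_nonneg_of_le_one {f g : α → ℝ} (hf : Summable f) (hf0 : ∀ a, 0 ≤ f a)
    (hg0 : ∀ a, 0 ≤ g a) (hg1 : ∀ a, g a ≤ 1) : Summable fun a => f a * g a :=
  hf.of_nonneg_of_le (fun a => mul_nonneg (hf0 a) (hg0 a))
    fun a => mul_le_of_le_one_right (hf0 a) (hg1 a)

lemma tsum_option {f : Option α → ℝ} (hf : Summable f) :
    ∑' x, f x = f none + ∑' a, f (some a) := by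
  rw [hf.tsum_eq_add_tsum_ite none]
  congr 1
  refine ((Option.some_injective α).tsum_eq fun x hx => ?_).symm.trans (tsum_congr fun a => ?_)
  · cases x with
    | none => simp at hx
    | some a => exact ⟨a, rfl⟩
  · simp

lemma tsum_comm_of_nonneg {β γ : Type*} {f : β → γ → ℝ} (hf : ∀ b c, 0 ≤ f b c)
    (hrow : ∀ b, Summable (f b)) (htot : Summable fun b => ∑' c, f b c) :
    ∑' b, ∑' c, f b c = ∑' c, ∑' b, f b c :=
  ((summable_prod_of_nonneg fun p => hf p.1 p.2).2 ⟨hrow, htot⟩).tsum_comm.symm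

end Summation

lemma monotoneOn_transition_to_absorbing {α : Type*} {P : ℝ → α → α → ℝ} {o : α}
    (hPnn : ∀ t a b, 0 ≤ t → 0 ≤ P t a b) (hPsum : ∀ t a, 0 ≤ t → ∑' b, P t a b = 1)
    (hCK : ∀ s t, 0 ≤ s → 0 ≤ t → ∀ a b, P (s + t) a b = ∑' c, P s a c * P t c b)
    (habs : ∀ t, 0 ≤ t → P t o o = 1) (a : α) :
    MonotoneOn (fun t => P t a o) (Ici 0) := by
  intro s hs t ht hst
  have hu : (0 : ℝ) ≤ t - s := sub_nonneg.2 hst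
  have hsum : Summable fun c => P s a c * P (t - s) c o :=
    (summable_of_tsum_eq_one (hPsum s a hs)).mul_of_nonneg_of_le_one (fun c => hPnn s a c hs)
      (fun c => hPnn _ c o hu) fun c => le_one_of_tsum_eq_one (hPnn _ c · hu) (hPsum _ c hu) _
  calc P s a o = P s a o * P (t - s) o o := by rw [habs _ hu, mul_one]
    _ ≤ ∑' c, P s a c * P (t - s) c o :=
      hsum.le_tsum o fun c _ => mul_nonneg (hPnn s a c hs) (hPnn _ c o hu)
    _ = P t a o := by rw [← hCK s _ hs hu, add_sub_cancel]

section AbsorbedChain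

variable {Λ : Type*} [Countable Λ] {P : ℝ → Option Λ → Option Λ → ℝ} {ν : Λ → ℝ}

lemma surv_le_one {t : ℝ} (hPt : ∀ a b, 0 ≤ P t a b) (hν0 : ∀ x, 0 ≤ ν x) :
    surv P ν t ≤ 1 :=
  sub_le_self _ (tsum_nonneg fun z => mul_nonneg (hν0 z) (hPt _ _))

lemma surv_lt_one {t : ℝ} (hPt : ∀ a b, 0 ≤ P t a b) (hPt1 : ∀ a, ∑' b, P t a b = 1)
    (hν0 : ∀ x, 0 ≤ ν x) (hν : Summable ν) {x : Λ} (hx : 0 < ν x)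
    (hxt : 0 < P t (some x) none) : surv P ν t < 1 := by
  have hsum : Summable fun z => ν z * P t (some z) none :=
    hν.mul_of_nonneg_of_le_one hν0 (fun z => hPt _ _)
      fun z => le_one_of_tsum_eq_one (hPt _) (hPt1 _) _
  have := hsum.le_tsum x fun z _ => mul_nonneg (hν0 z) (hPt _ _)
  rw [surv]
  nlinarith [mul_pos hx hxt]

lemma mul_survival_le_surv {t : ℝ} (hPt : ∀ a b, 0 ≤ P t a b) (hPt1 : ∀ a, ∑' b, P t a b = 1)
    (hν0 : ∀ x, 0 ≤ ν x) (hν1 : ∑' x, ν x = 1) (x : Λ) :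
    ν x * (1 - P t (some x) none) ≤ surv P ν t := by
  have hν := summable_of_tsum_eq_one hν1
  have hPle : ∀ z, P t (some z) none ≤ 1 := fun z => le_one_of_tsum_eq_one (hPt _) (hPt1 _) _
  have hsurv : surv P ν t = ∑' z, ν z * (1 - P t (some z) none) := by
    simp only [mul_sub, mul_one]
    rw [hν.tsum_sub (hν.mul_of_nonneg_of_le_one hν0 (fun z => hPt _ _) hPle), hν1, surv]
  rw [hsurv]
  exact (hν.mul_of_nonneg_of_le_one hν0 (fun z => sub_nonneg.2 (hPle z))
    fun z => sub_le_self _ (hPt _ _)).le_tsum x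
    fun z _ => mul_nonneg (hν0 z) (sub_nonneg.2 (hPle z))

lemma tsum_mul_transition_of_tcond_eq {t : ℝ} (hpos : 0 < surv P ν t)
    (hT : ∀ x, Tcond P ν t x = ν x) (y : Λ) :
    ∑' z, ν z * P t (some z) (some y) = ν y * surv P ν t :=
  (div_eq_iff hpos.ne').1 (hT y)

lemma surv_add (hPnn : ∀ t a b, 0 ≤ t → 0 ≤ P t a b)
    (hPsum : ∀ t a, 0 ≤ t → ∑' b : Option Λ, P t a b = 1)
    (hCK : ∀ s t, 0 ≤ s → 0 ≤ t → ∀ a b,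
      P (s + t) a b = ∑' c : Option Λ, P s a c * P t c b)
    (habs : ∀ t, 0 ≤ t → P t none none = 1) (hν0 : ∀ x, 0 ≤ ν x) (hν : Summable ν)
    {s t : ℝ} (hs : 0 ≤ s) (ht : 0 ≤ t)
    (hqsd : ∀ y, ∑' z, ν z * P s (some z) (some y) = ν y * surv P ν s) :
    surv P ν (s + t) = surv P ν s * surv P ν t := by
  have hPle : ∀ {u}, 0 ≤ u → ∀ a b, P u a b ≤ 1 :=
    fun hu a _ => le_one_of_tsum_eq_one (hPnn _ a · hu) (hPsum _ a hu) _
  have hrow : ∀ a, Summable fun c => P s a c * P t c none := fun a =>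
    (summable_of_tsum_eq_one (hPsum s a hs)).mul_of_nonneg_of_le_one (hPnn s a · hs)
      (hPnn t · none ht) (hPle ht · none)
  have hνrow : ∀ {u}, 0 ≤ u → ∀ b, Summable fun z => ν z * P u (some z) b :=
    fun hu b => hν.mul_of_nonneg_of_le_one hν0 (fun _ => hPnn _ _ b hu) (fun _ => hPle hu _ b)
  set h : Λ → Λ → ℝ := fun z y => ν z * (P s (some z) (some y) * P t (some y) none)
  have hh0 : ∀ z y, 0 ≤ h z y :=
    fun z y => mul_nonneg (hν0 z) (mul_nonneg (hPnn _ _ _ hs) (hPnn _ _ _ ht))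
  have hsplit : ∀ z, ν z * P (s + t) (some z) none = ν z * P s (some z) none + ∑' y, h z y := by
    intro z
    rw [hCK s t hs ht, tsum_option (hrow _), habs t ht, mul_one, mul_add, tsum_mul_left]
  have hh_row : ∀ z, Summable (h z) := fun z =>
    ((hrow (some z)).comp_injective (Option.some_injective Λ)).mul_left (ν z)
  have hh_tot : Summable fun z => ∑' y, h z y := by
    refine (hνrow (add_nonneg hs ht) none).of_nonneg_of_le (fun z => tsum_nonneg (hh0 z))
      fun z => ?_
    rw [hsplit]
    exact le_add_of_nonneg_left (mul_nonneg (hν0 z) (hPnn _ _ _ hs))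
  have hmass : ∑' z, ∑' y, h z y = surv P ν s * ∑' y, ν y * P t (some y) none := by
    rw [tsum_comm_of_nonneg hh0 hh_row hh_tot, ← tsum_mul_left]
    refine tsum_congr fun y => ?_
    simp only [h, ← mul_assoc, tsum_mul_right, hqsd]
    ring
  simp only [surv]
  rw [tsum_congr hsplit, (hνrow hs none).tsum_add hh_tot, hmass, surv]
  ring

end AbsorbedChain

lemma le_pow_floor_of_add_eq_mul {f : ℝ → ℝ} (hf0 : ∀ t, 0 ≤ t → 0 ≤ f t)
    (hf1 : ∀ t, 0 ≤ t → f t ≤ 1)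
    (hmul : ∀ s t, 0 ≤ s → 0 ≤ t → f (s + t) = f s * f t) {t₀ : ℝ} (ht₀ : 0 < t₀)
    {t : ℝ} (ht : 0 ≤ t) : f t ≤ f t₀ ^ ⌊t / t₀⌋₊ := by
  have hmultiple : ∀ n : ℕ, f (n * t₀) ≤ f t₀ ^ n := by
    intro n
    induction n with
    | zero => simpa using hf1 0 le_rfl
    | succ n ih =>
      rw [Nat.cast_succ, add_one_mul, hmul _ _ (by positivity) ht₀.le, pow_succ]
      exact mul_le_mul_of_nonneg_right ih (hf0 t₀ ht₀.le)
  set n := ⌊t / t₀⌋₊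
  have hn : n * t₀ ≤ t := (le_div_iff₀ ht₀).1 (Nat.floor_le (div_nonneg ht ht₀.le))
  calc f t = f (n * t₀) * f (t - n * t₀) := by rw [← hmul _ _ (by positivity) (by linarith),
        add_sub_cancel]
    _ ≤ f (n * t₀) := mul_le_of_le_one_right (hf0 _ (by positivity)) (hf1 _ (by linarith))
    _ ≤ f t₀ ^ n := hmultiple n

lemma exists_exp_decay_of_add_eq_mul {f : ℝ → ℝ} (hf0 : ∀ t, 0 ≤ t → 0 ≤ f t)
    (hf1 : ∀ t, 0 ≤ t → f t ≤ 1)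
    (hmul : ∀ s t, 0 ≤ s → 0 ≤ t → f (s + t) = f s * f t) {t₀ : ℝ} (ht₀ : 0 < t₀)
    (hpos : 0 < f t₀) (hlt : f t₀ < 1) :
    ∃ C κ : ℝ, 0 < κ ∧ ∀ t, 0 ≤ t → f t ≤ C * exp (-κ * t) := by
  set r := f t₀
  refine ⟨r⁻¹, -log r / t₀, div_pos (neg_pos.2 (log_neg hpos hlt)) ht₀, fun t ht => ?_⟩
  have hfloor : t / t₀ - 1 ≤ ⌊t / t₀⌋₊ := by linarith [Nat.lt_floor_add_one (t / t₀)]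
  calc f t ≤ r ^ ⌊t / t₀⌋₊ := le_pow_floor_of_add_eq_mul hf0 hf1 hmul ht₀ ht
    _ = r ^ (⌊t / t₀⌋₊ : ℝ) := (rpow_natCast r _).symm
    _ ≤ r ^ (t / t₀ - 1) := rpow_le_rpow_of_exponent_ge hpos hlt.le hfloor
    _ = r⁻¹ * exp (-(-log r / t₀) * t) := by
      rw [rpow_sub_one hpos.ne', rpow_def_of_pos hpos, div_eq_mul_inv, mul_comm]
      congr 1
      ring_nf

lemma integrableOn_exp_mul_of_antitoneOn {g : ℝ → ℝ} (hg : AntitoneOn g (Ioi 0))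
    (hg0 : ∀ t, 0 < t → 0 ≤ g t) {C κ θ : ℝ} (hθκ : θ < κ)
    (hbound : ∀ t, 0 < t → g t ≤ C * exp (-κ * t)) :
    IntegrableOn (fun t => exp (θ * t) * g t) (Ioi 0) := by
  refine Integrable.mono' ((exp_neg_integrableOn_Ioi 0 (sub_pos.2 hθκ)).const_mul C) ?_ ?_
  · exact ((continuous_exp.comp (continuous_const.mul continuous_id)).aemeasurable.mul
      (aemeasurable_restrict_of_antitoneOn measurableSet_Ioi hg)).aestronglyMeasurable
  · refine (ae_restrict_iff' measurableSet_Ioi).2 (ae_of_all _ fun t (ht : 0 < t) => ?_)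
    rw [norm_of_nonneg (mul_nonneg (exp_pos _).le (hg0 t ht))]
    calc exp (θ * t) * g t ≤ exp (θ * t) * (C * exp (-κ * t)) :=
          mul_le_mul_of_nonneg_left (hbound t ht) (exp_pos _).le
      _ = C * exp (-(κ - θ) * t) := by rw [mul_left_comm, ← exp_add]; ring_nf

/-- `E exp(θ τ^x) = 1 + θ ∫₀^∞ exp(θ t) P(τ^x > t) dt`, so the integrability below is the
finite exponential moment. -/
theorem qsd_exists_implies_exponential_moment_general {Λ : Type*} [Countable Λ]
    (P : ℝ → Option Λ → Option Λ → ℝ)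
    (hPnn : ∀ t a b, 0 ≤ t → 0 ≤ P t a b)
    (hPsum : ∀ t a, 0 ≤ t → ∑' b : Option Λ, P t a b = 1)
    (hCK : ∀ s t, 0 ≤ s → 0 ≤ t → ∀ a b,
      P (s + t) a b = ∑' c : Option Λ, P s a c * P t c b)
    (habs : ∀ t, 0 ≤ t → P t none none = 1)
    (hcert : ∀ x : Λ, Tendsto (fun t => 1 - P t (some x) none) atTop (nhds 0))
    (hQSD : ∃ ν : Λ → ℝ, (∀ x, 0 ≤ ν x) ∧ (∑' x : Λ, ν x) = 1 ∧
      (∀ t, 0 ≤ t → 0 < surv P ν t) ∧ (∀ t, 0 ≤ t → ∀ x, Tcond P ν t x = ν x)) :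
    ∃ (x : Λ) (θ : ℝ), 0 < θ ∧
      MeasureTheory.IntegrableOn
        (fun t => Real.exp (θ * t) * (1 - P t (some x) none)) (Set.Ioi (0:ℝ)) := by
  obtain ⟨ν, hν0, hν1, hspos, hT⟩ := hQSD
  have hν := summable_of_tsum_eq_one hν1
  obtain ⟨x, hx⟩ := exists_pos_of_tsum_eq_one hν0 hν1
  obtain ⟨t₀, hxt₀, ht₀⟩ : ∃ t₀, 0 < P t₀ (some x) none ∧ 0 < t₀ :=
    (((hcert x).eventually_lt_const one_pos).and (eventually_gt_atTop 0)).exists.imp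
      fun _ h => ⟨(sub_lt_self_iff 1).1 h.1, h.2⟩
  obtain ⟨C, κ, hκ, hdecay⟩ := exists_exp_decay_of_add_eq_mul (f := surv P ν)
    (fun t ht => (hspos t ht).le) (fun t ht => surv_le_one (hPnn t · · ht) hν0)
    (fun s t hs ht => surv_add hPnn hPsum hCK habs hν0 hν hs ht
      (tsum_mul_transition_of_tcond_eq (hspos s hs) (hT s hs)))
    ht₀ (hspos t₀ ht₀.le) (surv_lt_one (hPnn t₀ · · ht₀.le) (hPsum t₀ · ht₀.le) hν0 hν hx hxt₀)
  refine ⟨x, κ / 2, half_pos hκ,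
    integrableOn_exp_mul_of_antitoneOn (C := C / ν x) ?_ ?_ (half_lt_self hκ) ?_⟩
  · have hmono := monotoneOn_transition_to_absorbing hPnn hPsum hCK habs (some x)
    exact fun s hs t ht hst =>
      sub_le_sub_left (hmono (Ioi_subset_Ici_self hs) (Ioi_subset_Ici_self ht) hst) 1
  · exact fun t ht => sub_nonneg.2 (le_one_of_tsum_eq_one (hPnn t _ · ht.le) (hPsum t _ ht.le) _)
  · intro t ht
    calc 1 - P t (some x) none ≤ surv P ν t / ν x := (le_div_iff₀' hx).2
          (mul_survival_le_surv (hPnn t · · ht.le) (hPsum t · ht.le) hν0 hν1 x)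
      _ ≤ C * exp (-κ * t) / ν x := div_le_div_of_nonneg_right (hdecay t ht.le) hx.le
      _ = C / ν x * exp (-κ * t) := by ring

/-- If a quasi-stationary distribution exists, then there are a state `x ∈ Λ` and `θ > 0`
such that `E(exp (θ τ^x)) < ∞`, expressed through integrability of
`t ↦ exp (θ t) · P(τ^x > t)` on `(0,∞)` (note `E e^{θτ} = 1 + θ∫₀^∞ e^{θt} P(τ>t) dt`). -/
theorem qsd_exists_implies_exponential_moment {Λ : Type*} [Countable Λ]
    (P : ℝ → Option Λ → Option Λ → ℝ)
    (hP0 : ∀ a b, P 0 a b = if a = b then 1 else 0)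
    (hPnn : ∀ t a b, 0 ≤ t → 0 ≤ P t a b)
    (hPsum : ∀ t a, 0 ≤ t → ∑' b : Option Λ, P t a b = 1)
    (hCK : ∀ s t, 0 ≤ s → 0 ≤ t → ∀ a b,
      P (s + t) a b = ∑' c : Option Λ, P s a c * P t c b)
    (habs : ∀ t, 0 ≤ t → P t none none = 1)
    (hcert : ∀ x : Λ, Tendsto (fun t => 1 - P t (some x) none) atTop (nhds 0))
    (hQSD : ∃ ν : Λ → ℝ, (∀ x, 0 ≤ ν x) ∧ (∑' x : Λ, ν x) = 1 ∧
      (∀ t, 0 ≤ t → 0 < surv P ν t) ∧ (∀ t, 0 ≤ t → ∀ x, Tcond P ν t x = ν x)) :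
    ∃ (x : Λ) (θ : ℝ), 0 < θ ∧
      MeasureTheory.IntegrableOn
        (fun t => Real.exp (θ * t) * (1 - P t (some x) none)) (Set.Ioi (0:ℝ)) :=
  qsd_exists_implies_exponential_moment_general P hPnn hPsum hCK habs hcert hQSD
end

section
/- A probability measure ν on Λ is a quasi-stationary distribution for Q if and only if ν is a fixed point of the map Φ, where Φ(μ) is the unique invariant distribution of the μ-return process with rates q^μ(x,y) = q(x,y) + q(x,0)μ(y). -/
/-! The balance equation of the `μ`-return process, evaluated at `π = μ = ν`, is exactly the
QSD equation for `ν`; uniqueness of the invariant probability then gives both directions. -/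

theorem sum_mul_returnRate_eq {Λ : Type*} [Fintype Λ] (q : Λ → Option Λ → ℝ)
    (π μ : Λ → ℝ) (y : Λ) :
    ∑ x, π x * (q x (some y) + q x none * μ y)
      = ∑ x, q x (some y) * π x + (∑ x, q x none * π x) * μ y := by
  rw [Finset.sum_mul, ← Finset.sum_add_distrib]
  exact Finset.sum_congr rfl fun x _ => by ring

theorem qsd_iff_fixed_point_of_return_map_general {Λ : Type*} [Fintype Λ]
    (q : Λ → Option Λ → ℝ)
    (Φ : (Λ → ℝ) → (Λ → ℝ))
    (hΦinv : ∀ μ : Λ → ℝ, (∀ x, 0 ≤ μ x) → (∑ x, μ x) = 1 →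
      (∀ x, 0 ≤ Φ μ x) ∧ ((∑ x, Φ μ x) = 1) ∧
        (∀ y, (∑ x, Φ μ x * (q x (some y) + q x none * μ y)) = 0))
    (hΦuniq : ∀ μ : Λ → ℝ, (∀ x, 0 ≤ μ x) → (∑ x, μ x) = 1 →
      ∀ π : Λ → ℝ, (∀ x, 0 ≤ π x) → (∑ x, π x) = 1 →
      (∀ y, (∑ x, π x * (q x (some y) + q x none * μ y)) = 0) → π = Φ μ)
    (ν : Λ → ℝ) (hνnn : ∀ x, 0 ≤ ν x) (hν1 : (∑ x, ν x) = 1) :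
    (∀ x : Λ, (0:ℝ) = (∑ y, q y (some x) * ν y) + (∑ y, q y none * ν y) * ν x)
      ↔ Φ ν = ν := by
  simp only [← sum_mul_returnRate_eq q ν ν, eq_comm (a := (0 : ℝ))]
  constructor
  · intro hqsd
    exact (hΦuniq ν hνnn hν1 ν hνnn hν1 hqsd).symm
  · intro hfix
    simpa only [hfix] using (hΦinv ν hνnn hν1).2.2

/-- `ν` is a QSD for `Q` iff `ν` is a fixed point of the map `Φ`, where `Φ(μ)` is the
unique invariant distribution of the `μ`-return process with rates
`q^μ(x,y) = q(x,y) + q(x,0) μ(y)` (finite state space; `Φ` is assumed to produce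
the invariant probability of the return process, unique among probabilities). -/
theorem qsd_iff_fixed_point_of_return_map {Λ : Type*} [Fintype Λ] [DecidableEq Λ]
    (q : Λ → Option Λ → ℝ)
    (Φ : (Λ → ℝ) → (Λ → ℝ))
    (hΦinv : ∀ μ : Λ → ℝ, (∀ x, 0 ≤ μ x) → (∑ x, μ x) = 1 →
      (∀ x, 0 ≤ Φ μ x) ∧ ((∑ x, Φ μ x) = 1) ∧
        (∀ y, (∑ x, Φ μ x * (q x (some y) + q x none * μ y)) = 0))
    (hΦuniq : ∀ μ : Λ → ℝ, (∀ x, 0 ≤ μ x) → (∑ x, μ x) = 1 →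
      ∀ π : Λ → ℝ, (∀ x, 0 ≤ π x) → (∑ x, π x) = 1 →
      (∀ y, (∑ x, π x * (q x (some y) + q x none * μ y)) = 0) → π = Φ μ)
    (ν : Λ → ℝ) (hνnn : ∀ x, 0 ≤ ν x) (hν1 : (∑ x, ν x) = 1) :
    (∀ x : Λ, (0:ℝ) = (∑ y, q y (some x) * ν y) + (∑ y, q y none * ν y) * ν x)
      ↔ Φ ν = ν :=
  qsd_iff_fixed_point_of_return_map_general q Φ hΦinv hΦuniq ν hνnn hν1
end
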